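/- arXiv:1810.10737 — 6 statements merged into one kernel-verified Lean document; each statement's English description precedes it below -/
import Mathlib

section
/- Let L : ℝ^m → ℝ^ν be continuously differentiable and let f, g : ℝ^m → ℝ^m be continuous. Fix y, Ȳ ∈ ℝ^m, real numbers h, w, and vectors α₀, α₁ ∈ ℝ^ν, and set σ(τ) = y + τ(Ȳ − y) for τ ∈ [0,1]. Suppose the single-noise MAVF scheme equations hold: (i) Ȳ = y + h[∫₀¹ f(σ(τ)) dτ − (∫₀¹ ∇L(σ(τ))ᵀ dτ) α₀] + w[∫₀¹ g(σ(τ)) dτ − (∫₀¹ ∇L(σ(τ))ᵀ dτ) α₁]; (ii) (∫₀¹ ∇L(σ(τ)) dτ)(∫₀¹ ∇L(σ(τ))ᵀ dτ) α₀ = (∫₀¹ ∇L(σ(τ)) dτ)(∫₀¹ f(σ(τ)) dτ); (iii) (∫₀¹ ∇L(σ(τ)) dτ)(∫₀¹ ∇L(σ(τ))ᵀ dτ) α₁ = (∫₀¹ ∇L(σ(τ)) dτ)(∫₀¹ g(σ(τ)) dτ). Then L(Ȳ) = L(y). -/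
/-!
By the fundamental theorem of calculus along the segment `σ`, `L Ȳ - L y = A (Ȳ - y)`, where `A` is
the Jacobian of `L` averaged over `σ`. Equations (ii) and (iii) say precisely that `A` kills both
brackets of (i): `A (F - Aᵀ α₀) = A F - A Aᵀ α₀ = 0`, and likewise for `G`, `α₁`.
-/

open Matrix MeasureTheory

theorem Matrix.mulVec_sub_mulVec_eq_zero {R ι κ μ : Type*} [Ring R] [Fintype κ] [Fintype μ]
    {A : Matrix ι κ R} {B : Matrix κ μ R} {α : μ → R} {F : κ → R} (h : (A * B) *ᵥ α = A *ᵥ F) :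
    A *ᵥ (F - B *ᵥ α) = 0 := by
  rw [mulVec_sub, mulVec_mulVec, h, sub_self]

theorem LinearMap.apply_eq_mulVec {R ι κ : Type*} [CommSemiring R] [Fintype κ] [DecidableEq κ]
    (T : (κ → R) →ₗ[R] ι → R) (v : κ → R) :
    T v = (Matrix.of fun i l => T (Pi.single l 1) i) *ᵥ v := by
  rw [← LinearMap.toMatrix'_mulVec T]
  congr 1

theorem intervalIntegral_mulVec_apply {ι κ : Type*} [Fintype κ] {a b : ℝ} {M : ℝ → Matrix ι κ ℝ}
    (hM : ∀ i l, IntervalIntegrable (fun τ => M τ i l) volume a b) (v : κ → ℝ) (i : ι) :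
    ∫ τ in a..b, (M τ *ᵥ v) i = ((Matrix.of fun i l => ∫ τ in a..b, M τ i l) *ᵥ v) i := by
  simp only [mulVec, dotProduct, of_apply]
  rw [intervalIntegral.integral_finsetSum fun l _ => (hM i l).mul_const (v l)]
  simp only [intervalIntegral.integral_mul_const]

theorem ContDiff.sub_eq_intervalIntegral_fderiv {E F : Type*} [NormedAddCommGroup E]
    [NormedSpace ℝ E] [NormedAddCommGroup F] [NormedSpace ℝ F] [CompleteSpace F] {L : E → F}
    (hL : ContDiff ℝ 1 L) (x v : E) :
    L (x + v) - L x = ∫ τ in (0:ℝ)..1, fderiv ℝ L (x + τ • v) v := by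
  simpa [sub_eq_iff_eq_add'] using
    map_add_eq_sum_add_integral_iteratedFDeriv (n := 0) (x := x) (y := v) fun _ _ => hL.contDiffAt

theorem ContDiff.sub_eq_intervalIntegral_jacobian_mulVec {ι κ : Type*} [Fintype ι] [Fintype κ]
    [DecidableEq κ] {L : (κ → ℝ) → ι → ℝ} (hL : ContDiff ℝ 1 L) (x v : κ → ℝ) :
    L (x + v) - L x =
      (Matrix.of fun i l => ∫ τ in (0:ℝ)..1, fderiv ℝ L (x + τ • v) (Pi.single l 1) i) *ᵥ v := by
  have hcont : Continuous fun τ : ℝ => fderiv ℝ L (x + τ • v) :=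
    (hL.continuous_fderiv one_ne_zero).comp (by fun_prop)
  have hint : IntervalIntegrable (fun τ : ℝ => fderiv ℝ L (x + τ • v) v) volume 0 1 :=
    (hcont.clm_apply continuous_const).intervalIntegrable _ _
  ext i
  calc (L (x + v) - L x) i = ∫ τ in (0:ℝ)..1, fderiv ℝ L (x + τ • v) v i := by
        rw [hL.sub_eq_intervalIntegral_fderiv]
        exact ((ContinuousLinearMap.proj (R := ℝ) (φ := fun _ : ι => ℝ) i)
          |>.intervalIntegral_comp_comm hint).symm
    _ = ∫ τ in (0:ℝ)..1,
          ((Matrix.of fun i l => fderiv ℝ L (x + τ • v) (Pi.single l 1) i) *ᵥ v) i := by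
        congr with τ
        exact congrFun (LinearMap.apply_eq_mulVec (fderiv ℝ L (x + τ • v)).toLinearMap v) i
    _ = _ := intervalIntegral_mulVec_apply
          (fun i l => (by fun_prop : Continuous _).intervalIntegrable _ _) v i

theorem mavf_single_noise_preserves_invariants_general
    (m ν : ℕ) (L : (Fin m → ℝ) → (Fin ν → ℝ))
    (hL : ContDiff ℝ 1 L)
    (y Ybar : Fin m → ℝ) (h w : ℝ) (α₀ α₁ : Fin ν → ℝ)
    (σ : ℝ → (Fin m → ℝ)) (hσ : ∀ τ, σ τ = y + τ • (Ybar - y))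
    -- `J x` is the ν×m Jacobian matrix of `L` at `x`
    (J : (Fin m → ℝ) → Matrix (Fin ν) (Fin m) ℝ)
    (hJ : ∀ x i l, J x i l = fderiv ℝ L x (Pi.single l 1) i)
    -- `A = ∫₀¹ ∇L(σ(τ)) dτ` (componentwise)
    (A : Matrix (Fin ν) (Fin m) ℝ)
    (hA : ∀ i l, A i l = ∫ τ in (0:ℝ)..1, J (σ τ) i l)
    (F G : Fin m → ℝ)
    -- the MAVF scheme equations (i), (ii), (iii)
    (heq1 : Ybar = y + h • (F - Aᵀ.mulVec α₀) + w • (G - Aᵀ.mulVec α₁))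
    (heq2 : (A * Aᵀ).mulVec α₀ = A.mulVec F)
    (heq3 : (A * Aᵀ).mulVec α₁ = A.mulVec G) :
    L Ybar = L y := by
  have hA_avg : A = Matrix.of fun i l =>
      ∫ τ in (0:ℝ)..1, fderiv ℝ L (y + τ • (Ybar - y)) (Pi.single l 1) i := by
    ext i l
    simp only [hA, hσ, hJ, of_apply]
  have hmean : L Ybar - L y = A *ᵥ (Ybar - y) := by
    simpa [hA_avg] using hL.sub_eq_intervalIntegral_jacobian_mulVec y (Ybar - y)
  have hkernel : A *ᵥ (Ybar - y) = 0 := by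
    rw [heq1, add_assoc, add_sub_cancel_left, mulVec_add, mulVec_smul, mulVec_smul,
      mulVec_sub_mulVec_eq_zero heq2, mulVec_sub_mulVec_eq_zero heq3, smul_zero, smul_zero,
      add_zero]
  rwa [hkernel, sub_eq_zero] at hmean

/-- One step of the single-noise MAVF scheme exactly preserves
all ν invariants collected in `L` (part (I) of Theorem 3.1). -/
theorem mavf_single_noise_preserves_invariants
    (m ν : ℕ) (L : (Fin m → ℝ) → (Fin ν → ℝ))
    (f g : (Fin m → ℝ) → (Fin m → ℝ))
    (hL : ContDiff ℝ 1 L) (hf : Continuous f) (hg : Continuous g)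
    (y Ybar : Fin m → ℝ) (h w : ℝ) (α₀ α₁ : Fin ν → ℝ)
    (σ : ℝ → (Fin m → ℝ)) (hσ : ∀ τ, σ τ = y + τ • (Ybar - y))
    -- `J x` is the ν×m Jacobian matrix of `L` at `x`
    (J : (Fin m → ℝ) → Matrix (Fin ν) (Fin m) ℝ)
    (hJ : ∀ x i l, J x i l = fderiv ℝ L x (Pi.single l 1) i)
    -- `A = ∫₀¹ ∇L(σ(τ)) dτ` (componentwise)
    (A : Matrix (Fin ν) (Fin m) ℝ)
    (hA : ∀ i l, A i l = ∫ τ in (0:ℝ)..1, J (σ τ) i l)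
    -- `F = ∫₀¹ f(σ(τ)) dτ`, `G = ∫₀¹ g(σ(τ)) dτ` (componentwise)
    (F G : Fin m → ℝ)
    (hF : ∀ l, F l = ∫ τ in (0:ℝ)..1, f (σ τ) l)
    (hG : ∀ l, G l = ∫ τ in (0:ℝ)..1, g (σ τ) l)
    -- the MAVF scheme equations (i), (ii), (iii)
    (heq1 : Ybar = y + h • (F - Aᵀ.mulVec α₀) + w • (G - Aᵀ.mulVec α₁))
    (heq2 : (A * Aᵀ).mulVec α₀ = A.mulVec F)
    (heq3 : (A * Aᵀ).mulVec α₁ = A.mulVec G) :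
    L Ybar = L y :=
  mavf_single_noise_preserves_invariants_general m ν L hL y Ybar h w α₀ α₁ σ hσ J hJ A hA F G heq1
    heq2 heq3
end

section
/- Let L : ℝ^m → ℝ^ν be continuously differentiable and let f, g₁, …, g_D : ℝ^m → ℝ^m be continuous. Fix y, Ȳ ∈ ℝ^m, real numbers h, w₁, …, w_D, and vectors α₀, α₁, …, α_D ∈ ℝ^ν, and set σ(τ) = y + τ(Ȳ − y) for τ ∈ [0,1]. Suppose the multi-noise MAVF scheme equations hold: (i) Ȳ = y + h[∫₀¹ f(σ(τ)) dτ − (∫₀¹ ∇L(σ(τ))ᵀ dτ) α₀] + Σ_{r=1}^D w_r [∫₀¹ g_r(σ(τ)) dτ − (∫₀¹ ∇L(σ(τ))ᵀ dτ) α_r]; (ii) (∫₀¹ ∇L(σ(τ)) dτ)(∫₀¹ ∇L(σ(τ))ᵀ dτ) α₀ = (∫₀¹ ∇L(σ(τ)) dτ)(∫₀¹ f(σ(τ)) dτ); (iii) for each r = 1, …, D, (∫₀¹ ∇L(σ(τ)) dτ)(∫₀¹ ∇L(σ(τ))ᵀ dτ) α_r = (∫₀¹ ∇L(σ(τ)) dτ)(∫₀¹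 g_r(σ(τ)) dτ). Then L(Ȳ) = L(y). -/
/-!
Write `v = Ȳ - y` and `A = ∫₀¹ ∇L(σ(τ)) dτ`. Along the segment `σ`, the fundamental theorem of
calculus gives `L(Ȳ) - L(y) = ∫₀¹ ∇L(σ(τ)) v dτ = A v`. Equations (ii) and (iii) say that each of
`F - Aᵀα₀` and `G_r - Aᵀα_r` lies in the kernel of `A`, so by (i) so does `v`.
-/

open Matrix MeasureTheory

theorem Matrix.mulVec_sub_transpose_mulVec_eq_zero {ι κ R : Type*} [Fintype ι] [Fintype κ]
    [CommRing R] {A : Matrix ι κ R} {F : κ → R} {α : ι → R}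
    (hα : (A * Aᵀ) *ᵥ α = A *ᵥ F) : A *ᵥ (F - Aᵀ *ᵥ α) = 0 := by
  rw [mulVec_sub, mulVec_mulVec, hα, sub_self]

theorem Matrix.mulVec_smul_add_sum_smul_eq_zero {ι κ ρ R : Type*} [Fintype ι] [Fintype κ]
    [Fintype ρ] [CommRing R] {A : Matrix ι κ R} {F : κ → R} {G : ρ → κ → R} {α₀ : ι → R}
    {α : ρ → ι → R} (h : R) (w : ρ → R) (hα₀ : (A * Aᵀ) *ᵥ α₀ = A *ᵥ F)
    (hα : ∀ r, (A * Aᵀ) *ᵥ α r = A *ᵥ G r) :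
    A *ᵥ (h • (F - Aᵀ *ᵥ α₀) + ∑ r, w r • (G r - Aᵀ *ᵥ α r)) = 0 := by
  simp only [mulVec_add, mulVec_smul, mulVec_sum, mulVec_sub_transpose_mulVec_eq_zero hα₀,
    mulVec_sub_transpose_mulVec_eq_zero (hα _), smul_zero, Finset.sum_const_zero, add_zero]

theorem intervalIntegrable_pi_iff {ι : Type*} [Fintype ι] {μ : Measure ℝ} {a b : ℝ}
    {f : ℝ → ι → ℝ} :
    IntervalIntegrable f μ a b ↔ ∀ i, IntervalIntegrable (fun t => f t i) μ a b := by
  simp only [intervalIntegrable_iff, IntegrableOn, integrable_pi_iff]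

theorem intervalIntegral_pi_apply {ι : Type*} [Fintype ι] {μ : Measure ℝ} {a b : ℝ}
    {f : ℝ → ι → ℝ} (hf : IntervalIntegrable f μ a b) (i : ι) :
    (∫ t in a..b, f t ∂μ) i = ∫ t in a..b, f t i ∂μ :=
  ((ContinuousLinearMap.proj (R := ℝ) (φ := fun _ : ι => ℝ) i).intervalIntegral_comp_comm hf).symm

theorem intervalIntegral_mulVec {ι κ : Type*} [Fintype ι] [Fintype κ] {μ : Measure ℝ}
    {a b : ℝ} {M : ℝ → Matrix ι κ ℝ} (hM : ∀ i j, IntervalIntegrable (fun t => M t i j) μ a b)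
    (v : κ → ℝ) :
    ∫ t in a..b, M t *ᵥ v ∂μ = (Matrix.of fun i j => ∫ t in a..b, M t i j ∂μ) *ᵥ v := by
  have hentry : ∀ i j, IntervalIntegrable (fun t => M t i j * v j) μ a b := fun i j =>
    (hM i j).mul_const (v j)
  have hMv : IntervalIntegrable (fun t => M t *ᵥ v) μ a b :=
    intervalIntegrable_pi_iff.2 fun i => by
      simpa only [mulVec, dotProduct, Finset.sum_fn] using
        IntervalIntegrable.sum Finset.univ fun j _ => hentry i j
  ext i
  rw [intervalIntegral_pi_apply hMv]
  simp only [mulVec, dotProduct, of_apply]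
  rw [intervalIntegral.integral_finsetSum fun j _ => hentry i j]
  simp only [intervalIntegral.integral_mul_const]

theorem ContDiff.sub_eq_intervalIntegral_fderiv_segment {E F : Type*}
    [NormedAddCommGroup E] [NormedSpace ℝ E] [NormedAddCommGroup F] [NormedSpace ℝ F]
    [CompleteSpace F] {L : E → F} (hL : ContDiff ℝ 1 L) (a b : E) :
    L b - L a = ∫ t in (0 : ℝ)..1, fderiv ℝ L (a + t • (b - a)) (b - a) := by
  have hsegment : ∀ t : ℝ, HasDerivAt (fun t : ℝ => a + t • (b - a)) (b - a) t := fun t => by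
    simpa using ((hasDerivAt_id t).smul_const (b - a)).const_add a
  have hderiv : ∀ t : ℝ, HasDerivAt (fun t : ℝ => L (a + t • (b - a)))
      (fderiv ℝ L (a + t • (b - a)) (b - a)) t := fun t =>
    ((hL.differentiable one_ne_zero) _).hasFDerivAt.comp_hasDerivAt t (hsegment t)
  have hcont : Continuous fun t : ℝ => fderiv ℝ L (a + t • (b - a)) (b - a) := by
    have := hL.continuous_fderiv one_ne_zero
    fun_prop
  rw [intervalIntegral.integral_eq_sub_of_hasDerivAt (fun t _ => hderiv t)
    (hcont.intervalIntegrable 0 1)]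
  simp

theorem mavf_multi_noise_preserves_invariants_general
    (m ν D : ℕ) (L : (Fin m → ℝ) → (Fin ν → ℝ))
    (hL : ContDiff ℝ 1 L)
    (y Ybar : Fin m → ℝ) (h : ℝ) (w : Fin D → ℝ)
    (α₀ : Fin ν → ℝ) (α : Fin D → Fin ν → ℝ)
    (σ : ℝ → (Fin m → ℝ)) (hσ : ∀ τ, σ τ = y + τ • (Ybar - y))
    -- `J x` is the ν×m Jacobian matrix of `L` at `x`
    (J : (Fin m → ℝ) → Matrix (Fin ν) (Fin m) ℝ)
    (hJ : ∀ x i l, J x i l = fderiv ℝ L x (Pi.single l 1) i)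
    -- `A = ∫₀¹ ∇L(σ(τ)) dτ` (componentwise)
    (A : Matrix (Fin ν) (Fin m) ℝ)
    (hA : ∀ i l, A i l = ∫ τ in (0:ℝ)..1, J (σ τ) i l)
    (F : Fin m → ℝ) (G : Fin D → Fin m → ℝ)
    -- the MAVF scheme equations (i), (ii), (iii)
    (heq1 : Ybar = y + h • (F - Aᵀ.mulVec α₀) + ∑ r, w r • (G r - Aᵀ.mulVec (α r)))
    (heq2 : (A * Aᵀ).mulVec α₀ = A.mulVec F)
    (heq3 : ∀ r, (A * Aᵀ).mulVec (α r) = A.mulVec (G r)) :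
    L Ybar = L y := by
  have hJ_toMatrix : ∀ x, J x = LinearMap.toMatrix' (fderiv ℝ L x : (Fin m → ℝ) →ₗ[ℝ] _) :=
    fun x => by ext i l; rw [hJ, LinearMap.toMatrix'_apply]; rfl
  have hJ_cont : ∀ i l, Continuous fun τ => J (σ τ) i l := fun i l => by
    have := hL.continuous_fderiv one_ne_zero
    simp only [hJ, hσ]
    fun_prop
  have hA_of : A = of fun i l => ∫ τ in (0:ℝ)..1, J (σ τ) i l := by ext i l; exact hA i l
  have hkernel : A *ᵥ (Ybar - y) = 0 := by
    rw [show Ybar - y = h • (F - Aᵀ *ᵥ α₀) + ∑ r, w r • (G r - Aᵀ *ᵥ α r) by rw [heq1]; abel]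
    exact mulVec_smul_add_sum_smul_eq_zero h w heq2 heq3
  rw [← sub_eq_zero, hL.sub_eq_intervalIntegral_fderiv_segment, ← hkernel, hA_of,
    ← intervalIntegral_mulVec fun i l => (hJ_cont i l).intervalIntegrable 0 1]
  congr 1 with τ
  rw [hJ_toMatrix, LinearMap.toMatrix'_mulVec, hσ]
  rfl

/-- One step of the multi-noise MAVF scheme exactly preserves
all ν invariants collected in `L` (part (I) of Theorem 3.2). -/
theorem mavf_multi_noise_preserves_invariants
    (m ν D : ℕ) (L : (Fin m → ℝ) → (Fin ν → ℝ))
    (f : (Fin m → ℝ) → (Fin m → ℝ)) (g : Fin D → (Fin m → ℝ) → (Fin m → ℝ))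
    (hL : ContDiff ℝ 1 L) (hf : Continuous f) (hg : ∀ r, Continuous (g r))
    (y Ybar : Fin m → ℝ) (h : ℝ) (w : Fin D → ℝ)
    (α₀ : Fin ν → ℝ) (α : Fin D → Fin ν → ℝ)
    (σ : ℝ → (Fin m → ℝ)) (hσ : ∀ τ, σ τ = y + τ • (Ybar - y))
    -- `J x` is the ν×m Jacobian matrix of `L` at `x`
    (J : (Fin m → ℝ) → Matrix (Fin ν) (Fin m) ℝ)
    (hJ : ∀ x i l, J x i l = fderiv ℝ L x (Pi.single l 1) i)
    -- `A = ∫₀¹ ∇L(σ(τ)) dτ` (componentwise)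
    (A : Matrix (Fin ν) (Fin m) ℝ)
    (hA : ∀ i l, A i l = ∫ τ in (0:ℝ)..1, J (σ τ) i l)
    -- `F = ∫₀¹ f(σ(τ)) dτ`, `G r = ∫₀¹ g_r(σ(τ)) dτ` (componentwise)
    (F : Fin m → ℝ) (G : Fin D → Fin m → ℝ)
    (hF : ∀ l, F l = ∫ τ in (0:ℝ)..1, f (σ τ) l)
    (hG : ∀ r l, G r l = ∫ τ in (0:ℝ)..1, g r (σ τ) l)
    -- the MAVF scheme equations (i), (ii), (iii)
    (heq1 : Ybar = y + h • (F - Aᵀ.mulVec α₀) + ∑ r, w r • (G r - Aᵀ.mulVec (α r)))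
    (heq2 : (A * Aᵀ).mulVec α₀ = A.mulVec F)
    (heq3 : ∀ r, (A * Aᵀ).mulVec (α r) = A.mulVec (G r)) :
    L Ybar = L y :=
  mavf_multi_noise_preserves_invariants_general m ν D L hL y Ybar h w α₀ α σ hσ J hJ A hA F G heq1
    heq2 heq3
end

section
/- Let j ∈ ℕ and let P : [0,1] → ℝ be continuous with ∫₀¹ P(τ) τ^k dτ = 0 for all integers 0 ≤ k < j. Let F : ℝ → ℝ be (j+1) times continuously differentiable on [0,1] with |F^{(j+1)}(τ)| ≤ M for all τ ∈ [0,1]. Then |∫₀¹ P(τ) F(τ) dτ − (F^{(j)}(0)/j!) ∫₀¹ P(τ) τ^j dτ| ≤ (M/(j+1)!) ∫₀¹ |P(τ)| dτ. -/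
/-!
Subtract the degree-`j` Taylor polynomial of `F` at `0`. Orthogonality of `P` to `τ^k`, `k < j`,
leaves only its top term `F^{(j)}(0)/j! · τ^j` visible to `∫₀¹ P ·`, and by Lagrange's form of the
remainder the difference is bounded on `[0,1]` by `M τ^{j+1}/(j+1)! ≤ M/(j+1)!`.
-/

open Set Topology MeasureTheory

theorem iteratedDerivWithin_congr_set {𝕜 F : Type*} [NontriviallyNormedField 𝕜]
    [NormedAddCommGroup F] [NormedSpace 𝕜 F] {f : 𝕜 → F} {s t : Set 𝕜} {x : 𝕜}
    (h : s =ᶠ[𝓝 x] t) (n : ℕ) :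
    iteratedDerivWithin n f s x = iteratedDerivWithin n f t x := by
  simp only [iteratedDerivWithin_eq_iteratedFDerivWithin, iteratedFDerivWithin_congr_set h n]

theorem taylorWithinEval_congr_set {E : Type*} [NormedAddCommGroup E] [NormedSpace ℝ E]
    {f : ℝ → E} {s t : Set ℝ} {x₀ : ℝ} (h : s =ᶠ[𝓝 x₀] t) (n : ℕ) (x : ℝ) :
    taylorWithinEval f n s x₀ x = taylorWithinEval f n t x₀ x := by
  simp only [taylor_within_apply, iteratedDerivWithin_congr_set h]

theorem Icc_eventuallyEq_Icc_of_lt {a b x y : ℝ} (hyx : y < x) (hxb : x ≤ b) :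
    Icc a x =ᶠ[𝓝 y] Icc a b := by
  filter_upwards [Iio_mem_nhds hyx] with z hz
  exact propext ⟨fun h ↦ ⟨h.1, h.2.trans hxb⟩, fun h ↦ ⟨h.1, le_of_lt hz⟩⟩

-- Unlike `taylor_mean_remainder_bound` (denominator `n!`), this has the sharp Lagrange constant.
theorem abs_taylor_remainder_le_lagrange {f : ℝ → ℝ} {a b C x : ℝ} {n : ℕ}
    (hf : ContDiffOn ℝ (n + 1) f (Icc a b)) (hx : x ∈ Icc a b)
    (hC : ∀ y ∈ Icc a b, |iteratedDerivWithin (n + 1) f (Icc a b) y| ≤ C) :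
    |f x - taylorWithinEval f n (Icc a b) a x| ≤ C * (x - a) ^ (n + 1) / (n + 1).factorial := by
  rcases hx.1.eq_or_lt with rfl | hax
  · simp [taylorWithinEval_self]
  have hsub : Icc a x ⊆ Icc a b := Icc_subset_Icc_right hx.2
  have hfx : ContDiffOn ℝ (n + 1) f (Icc a x) := hf.mono hsub
  have hdiff : DifferentiableOn ℝ (iteratedDerivWithin n f (Icc a x)) (Ioo a x) :=
    (hfx.differentiableOn_iteratedDerivWithin (mod_cast n.lt_succ_self)
      (uniqueDiffOn_Icc hax)).mono Ioo_subset_Icc_self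
  obtain ⟨y, hy, hrem⟩ := taylor_mean_remainder_lagrange (n := n) hax.ne
    (by rw [uIcc_of_le hax.le]; exact hfx.of_succ) (by rwa [uIcc_of_le hax.le, uIoo_of_le hax.le])
  rw [uIoo_of_le hax.le] at hy
  -- derivatives within `[a, x]` and within `[a, b]` agree at points left of `x`
  rw [uIcc_of_le hax.le, taylorWithinEval_congr_set (Icc_eventuallyEq_Icc_of_lt hax hx.2),
    iteratedDerivWithin_congr_set (Icc_eventuallyEq_Icc_of_lt hy.2 hx.2)] at hrem
  rw [hrem, abs_div, abs_mul, abs_of_nonneg (pow_nonneg (sub_nonneg.2 hx.1) _), Nat.abs_cast]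
  gcongr
  exact hC y ⟨hy.1.le, hy.2.le.trans hx.2⟩

theorem continuous_taylorWithinEval {E : Type*} [NormedAddCommGroup E] [NormedSpace ℝ E]
    (f : ℝ → E) (n : ℕ) (s : Set ℝ) (x₀ : ℝ) : Continuous (taylorWithinEval f n s x₀) := by
  simp only [funext (taylor_within_apply f n s x₀)]
  fun_prop

theorem integral_mul_taylorWithinEval {P f : ℝ → ℝ} {s : Set ℝ} {a b x₀ : ℝ}
    (hP : IntervalIntegrable P volume a b) (n : ℕ) :
    ∫ x in a..b, P x * taylorWithinEval f n s x₀ x =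
      ∑ k ∈ Finset.range (n + 1),
        iteratedDerivWithin k f s x₀ / k.factorial * ∫ x in a..b, P x * (x - x₀) ^ k := by
  simp only [taylor_within_apply, smul_eq_mul, Finset.mul_sum]
  rw [intervalIntegral.integral_finsetSum fun k _ ↦ hP.mul_continuousOn (by fun_prop)]
  refine Finset.sum_congr rfl fun k _ ↦ ?_
  rw [← intervalIntegral.integral_const_mul]
  congr 1 with x
  ring

theorem abs_integral_mul_le_of_abs_le {P g : ℝ → ℝ} {a b K : ℝ} (hab : a ≤ b)
    (hP : IntervalIntegrable P volume a b)
    (hg : ∀ x ∈ Icc a b, |g x| ≤ K) :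
    |∫ x in a..b, P x * g x| ≤ K * ∫ x in a..b, |P x| := by
  rw [← intervalIntegral.integral_const_mul, ← Real.norm_eq_abs]
  refine intervalIntegral.norm_integral_le_of_norm_le hab (.of_forall fun x hx ↦ ?_)
    (hP.abs.const_mul K)
  rw [Real.norm_eq_abs, abs_mul, mul_comm]
  exact mul_le_mul_of_nonneg_right (hg x (Ioc_subset_Icc_self hx)) (abs_nonneg _)

/-- deterministic core of Lemma 3.3: if `P` is orthogonal to all
monomials `τ^k`, `k < j`, on `[0,1]` and `F` is `(j+1)` times continuously
differentiable on `[0,1]` with `|F^{(j+1)}| ≤ M` there, then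
`∫₀¹ P F` equals `(F^{(j)}(0)/j!) ∫₀¹ P τ^j` up to an error of size
`(M/(j+1)!) ∫₀¹ |P|`. -/
theorem legendre_projection_remainder_bound
    (j : ℕ) (P : ℝ → ℝ) (hP : ContinuousOn P (Set.Icc (0:ℝ) 1))
    (horth : ∀ k < j, ∫ τ in (0:ℝ)..1, P τ * τ ^ k = 0)
    (F : ℝ → ℝ) (M : ℝ)
    (hF : ContDiffOn ℝ (j + 1) F (Set.Icc (0:ℝ) 1))
    (hM : ∀ τ ∈ Set.Icc (0:ℝ) 1,
      |iteratedDerivWithin (j + 1) F (Set.Icc (0:ℝ) 1) τ| ≤ M) :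
    |(∫ τ in (0:ℝ)..1, P τ * F τ)
        - (iteratedDerivWithin j F (Set.Icc (0:ℝ) 1) 0 / j.factorial)
          * ∫ τ in (0:ℝ)..1, P τ * τ ^ j|
      ≤ (M / (j + 1).factorial) * ∫ τ in (0:ℝ)..1, |P τ| := by
  set T := taylorWithinEval F j (Icc (0:ℝ) 1) 0
  have hPint : IntervalIntegrable P volume 0 1 :=
    hP.intervalIntegrable_of_Icc zero_le_one
  have hT : ∫ τ in (0:ℝ)..1, P τ * T τ =
      iteratedDerivWithin j F (Icc 0 1) 0 / j.factorial * ∫ τ in (0:ℝ)..1, P τ * τ ^ j := by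
    simp only [T, integral_mul_taylorWithinEval hPint, sub_zero, Finset.sum_range_succ]
    rw [Finset.sum_eq_zero fun k hk ↦ by rw [horth k (Finset.mem_range.1 hk), mul_zero],
      zero_add]
  have hrem : ∀ τ ∈ Icc (0:ℝ) 1, |F τ - T τ| ≤ M / (j + 1).factorial := fun τ hτ ↦ by
    have hM0 : 0 ≤ M := (abs_nonneg _).trans (hM 0 ⟨le_rfl, zero_le_one⟩)
    refine (abs_taylor_remainder_le_lagrange hF hτ hM).trans ?_
    rw [sub_zero]
    gcongr
    exact mul_le_of_le_one_right hM0 (pow_le_one₀ hτ.1 hτ.2)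
  have hPT : IntervalIntegrable (fun τ ↦ P τ * T τ) volume 0 1 :=
    hPint.mul_continuousOn (continuous_taylorWithinEval ..).continuousOn
  have hPF : IntervalIntegrable (fun τ ↦ P τ * F τ) volume 0 1 :=
    hPint.mul_continuousOn (by rw [uIcc_of_le zero_le_one]; exact hF.continuousOn)
  rw [← hT, ← intervalIntegral.integral_sub hPF hPT]
  simp only [← mul_sub]
  exact abs_integral_mul_le_of_abs_le zero_le_one hPint hrem
end

section
/- Let γ be the standard Gaussian measure N(0,1) on ℝ, let k ≥ 1 be an integer, let h ∈ (0, 1/2], set A_h = √(2k |ln h|), and define the truncation ζ_h(x) = x if |x| ≤ A_h, ζ_h(x) = A_h if x > A_h, and ζ_h(x) = −A_h if x < −A_h. Then ∫_ℝ (ζ_h(x) − x)² dγ(x) ≤ h^k. -/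
/-!
For `y ≥ 0` and `a ≥ 0` one has `(y + a)² ≥ y² + a²`, so the standard Gaussian density
satisfies `φ(y + a) ≤ e^{-a²/2} φ(y)`. Shifting the upper tail by `A` therefore gives
`E[(ξ - A)₊²] ≤ e^{-A²/2} E[ξ₊²] = e^{-A²/2} / 2`; the lower tail contributes the same
by symmetry, and `e^{-A²/2} = h^k` by the choice of `A`.
-/

open MeasureTheory Real
open scoped NNReal

namespace ProbabilityTheory

variable {μ : ℝ} {v : ℝ≥0}

lemma integrable_comp_neg_gaussianReal_zero_iff {f : ℝ → ℝ} :
    Integrable (fun x => f (-x)) (gaussianReal 0 v) ↔ Integrable f (gaussianReal 0 v) := by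
  conv_rhs => rw [← neg_zero, ← gaussianReal_map_neg]
  exact ((MeasurableEquiv.neg ℝ).measurableEmbedding.integrable_map_iff).symm

lemma integral_comp_neg_gaussianReal_zero (f : ℝ → ℝ) :
    ∫ x, f (-x) ∂gaussianReal 0 v = ∫ x, f x ∂gaussianReal 0 v := by
  conv_rhs => rw [← neg_zero, ← gaussianReal_map_neg]
  exact ((MeasurableEquiv.neg ℝ).measurableEmbedding.integral_map f).symm

lemma integral_sq_gaussianReal_zero : ∫ x, x ^ 2 ∂gaussianReal 0 v = v := by
  simpa [variance_eq_integral measurable_id'.aemeasurable] using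
    variance_fun_id_gaussianReal (μ := 0) (v := v)

lemma integrable_max_sub_zero_sq_gaussianReal (a : ℝ) :
    Integrable (fun x => max (x - a) 0 ^ 2) (gaussianReal μ v) := by
  refine ((memLp_id_gaussianReal 2).sub (memLp_const a)).integrable_sq.mono (by fun_prop)
    (ae_of_all _ fun x => ?_)
  simp only [norm_pow, Real.norm_eq_abs, sq_abs, Pi.sub_apply, id]
  rcases le_total (x - a) 0 with h | h
  · simp [max_eq_right h, sq_nonneg]
  · rw [max_eq_left h]

lemma integral_max_zero_sq_gaussianReal_zero : ∫ x, max x 0 ^ 2 ∂gaussianReal 0 v = v / 2 := by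
  have h_split : ∀ x : ℝ, x ^ 2 = max x 0 ^ 2 + max (-x) 0 ^ 2 := fun x => by
    rcases le_total x 0 with h | h
    · rw [max_eq_right h, max_eq_left (neg_nonneg.2 h)]; ring
    · rw [max_eq_left h, max_eq_right (neg_nonpos.2 h)]; ring
  have h_int : Integrable (fun x => max x 0 ^ 2) (gaussianReal 0 v) := by
    simpa using integrable_max_sub_zero_sq_gaussianReal (μ := 0) (v := v) 0
  have := integral_sq_gaussianReal_zero (v := v)
  rw [integral_congr_ae (ae_of_all _ h_split),
    integral_add h_int (integrable_comp_neg_gaussianReal_zero_iff.2 h_int),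
    integral_comp_neg_gaussianReal_zero fun x => max x 0 ^ 2] at this
  linarith

lemma integrable_gaussianPDFReal_mul (hv : v ≠ 0) {f : ℝ → ℝ}
    (hf : Integrable f (gaussianReal μ v)) :
    Integrable (fun x => gaussianPDFReal μ v x * f x) := by
  rw [gaussianReal_of_var_ne_zero _ hv, integrable_withDensity_iff_integrable_smul'
    (measurable_gaussianPDF μ v) (ae_of_all _ fun _ => gaussianPDF_lt_top)] at hf
  simpa using hf

lemma gaussianPDFReal_zero_add_le {a y : ℝ} (ha : 0 ≤ a) (hy : 0 ≤ y) :
    gaussianPDFReal 0 v (y + a) ≤ exp (-a ^ 2 / (2 * v)) * gaussianPDFReal 0 v y := by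
  simp only [gaussianPDFReal, sub_zero]
  rw [mul_left_comm, ← exp_add]
  gcongr
  rw [← add_div]
  gcongr
  nlinarith [mul_nonneg ha hy]

lemma integral_max_sub_zero_sq_gaussianReal_zero_le (hv : v ≠ 0) {a : ℝ} (ha : 0 ≤ a) :
    ∫ x, max (x - a) 0 ^ 2 ∂gaussianReal 0 v ≤ exp (-a ^ 2 / (2 * v)) * (v / 2) := by
  have h_int : Integrable fun y => gaussianPDFReal 0 v y * max y 0 ^ 2 := by
    simpa using integrable_gaussianPDFReal_mul hv
      (integrable_max_sub_zero_sq_gaussianReal (μ := 0) (v := v) 0)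
  rw [← integral_max_zero_sq_gaussianReal_zero, integral_gaussianReal_eq_integral_smul hv,
    integral_gaussianReal_eq_integral_smul hv, ← integral_const_mul]
  calc ∫ x, gaussianPDFReal 0 v x • max (x - a) 0 ^ 2
      = ∫ y, gaussianPDFReal 0 v (y + a) * max y 0 ^ 2 := by
        rw [← integral_add_right_eq_self _ a]
        simp
    _ ≤ ∫ y, exp (-a ^ 2 / (2 * v)) * (gaussianPDFReal 0 v y • max y 0 ^ 2) := by
        refine integral_mono_of_nonneg
          (ae_of_all _ fun y => mul_nonneg (gaussianPDFReal_nonneg ..) (sq_nonneg _))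
          (h_int.const_mul _) (ae_of_all _ fun y => ?_)
        dsimp only
        rcases le_total y 0 with hy | hy
        · simp [max_eq_right hy]
        · rw [smul_eq_mul, ← mul_assoc]
          gcongr
          exact gaussianPDFReal_zero_add_le ha hy

end ProbabilityTheory

lemma sq_truncation_sub_self {A : ℝ} (hA : 0 ≤ A) (x : ℝ) :
    ((if |x| ≤ A then x else if x > A then A else -A) - x) ^ 2
      = max (x - A) 0 ^ 2 + max (-x - A) 0 ^ 2 := by
  split_ifs with h_in h_above
  · rw [abs_le] at h_in
    rw [max_eq_right (by linarith), max_eq_right (by linarith)]; ring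
  · rw [max_eq_left (by linarith), max_eq_right (by linarith)]; ring
  · rw [max_eq_right (by linarith), max_eq_left (by cases abs_cases x <;> linarith)]; ring

lemma Real.exp_neg_sqrt_two_mul_abs_log_sq_div_two (k : ℕ) {h : ℝ} (h0 : 0 < h) (h1 : h ≤ 1) :
    exp (-√(2 * k * |log h|) ^ 2 / 2) = h ^ k := by
  rw [sq_sqrt (by positivity), abs_of_nonpos (log_nonpos h0.le h1),
    show -(2 * (k : ℝ) * -log h) / 2 = k * log h by ring, exp_nat_mul, exp_log h0]

open ProbabilityTheory

theorem gaussian_truncation_l2_error_general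
    (k : ℕ) (h : ℝ) (hh : h ∈ Set.Ioc (0:ℝ) (1/2))
    (A : ℝ) (hA : A = Real.sqrt (2 * k * |Real.log h|))
    (ζ : ℝ → ℝ)
    (hζ : ∀ x, ζ x = if |x| ≤ A then x else if x > A then A else -A) :
    ∫ x, (ζ x - x) ^ 2 ∂(gaussianReal 0 1) ≤ h ^ k := by
  have hA0 : 0 ≤ A := hA ▸ sqrt_nonneg _
  have h_int := integrable_max_sub_zero_sq_gaussianReal (μ := 0) (v := 1) A
  calc ∫ x, (ζ x - x) ^ 2 ∂gaussianReal 0 1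
      = ∫ x, max (x - A) 0 ^ 2 + max (-x - A) 0 ^ 2 ∂gaussianReal 0 1 := by
        simp_rw [hζ, sq_truncation_sub_self hA0]
    _ = 2 * ∫ x, max (x - A) 0 ^ 2 ∂gaussianReal 0 1 := by
        rw [integral_add h_int (integrable_comp_neg_gaussianReal_zero_iff.2 h_int),
          integral_comp_neg_gaussianReal_zero fun x => max (x - A) 0 ^ 2]
        ring
    _ ≤ exp (-A ^ 2 / 2) := by
        have := integral_max_sub_zero_sq_gaussianReal_zero_le one_ne_zero hA0
        simp only [NNReal.coe_one, mul_one] at this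
        linarith
    _ = h ^ k := by
        rw [hA]
        exact exp_neg_sqrt_two_mul_abs_log_sq_div_two k hh.1 (by linarith [hh.2])

/-- Lemma 2.3, first estimate: the mean square error of the
truncation of a standard Gaussian at level `A_h = √(2k|ln h|)` is at most `h^k`. -/
theorem gaussian_truncation_l2_error
    (k : ℕ) (hk : 1 ≤ k) (h : ℝ) (hh : h ∈ Set.Ioc (0:ℝ) (1/2))
    (A : ℝ) (hA : A = Real.sqrt (2 * k * |Real.log h|))
    (ζ : ℝ → ℝ)
    (hζ : ∀ x, ζ x = if |x| ≤ A then x else if x > A then A else -A) :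
    ∫ x, (ζ x - x) ^ 2 ∂(gaussianReal 0 1) ≤ h ^ k :=
  gaussian_truncation_l2_error_general k h hh A hA ζ hζ
end

section
/- Let q ≥ 1 and M ≥ 1 be integers, let c₁, …, c_M ∈ [0,1] and b₁, …, b_M ∈ ℝ satisfy Σ_{i=1}^M b_i c_i^j = 1/(j+1) for 0 ≤ j ≤ q−1. Let G : ℝ^m → ℝ be q times continuously differentiable with sup_{x∈ℝ^m} ‖D^q G(x)‖ ≤ K, where ‖D^q G(x)‖ is the operator norm of the q-th derivative of G at x as a q-multilinear map on ℝ^m. For y, Ỹ ∈ ℝ^m let σ(τ) = y + τ(Ỹ − y). Then |∫₀¹ G(σ(τ)) dτ − Σ_{i=1}^M b_i G(σ(c_i))| ≤ (1 + Σ_{i=1}^M |b_i|) K |Ỹ − y|^q / q!. -/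
/-!
With `g τ = G (y + τ • (Ỹ - y))`, the chain rule gives
`g⁽q⁾ τ = D^q G (y + τ • (Ỹ - y)) (Ỹ - y, …, Ỹ - y)`, so `|g⁽q⁾| ≤ K |Ỹ - y|^q`. By Taylor's
theorem with Lagrange remainder, `g` is then within `ε = K |Ỹ - y|^q / q!` of its Taylor
polynomial `p` of degree `< q` on `[0, 1]`. The rule integrates `p` exactly, so its error on `g`
is at most `∫₀¹ |g - p| + ∑ |b i| |g (c i) - p (c i)| ≤ (1 + ∑ |b i|) ε`.
-/

open Set Finset Nat MeasureTheory

theorem taylorWithinEval_eq_sum_iteratedDeriv {f : ℝ → ℝ} {n : ℕ} (hf : ContDiff ℝ n f)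
    {s : Set ℝ} (hs : UniqueDiffOn ℝ s) {x₀ : ℝ} (hx₀ : x₀ ∈ s) (x : ℝ) :
    taylorWithinEval f n s x₀ x =
      ∑ k ∈ range (n + 1), iteratedDeriv k f x₀ / k ! * (x - x₀) ^ k := by
  rw [taylor_within_apply]
  refine Finset.sum_congr rfl fun k hk => ?_
  have hfk : ContDiff ℝ k f := hf.of_le (by exact_mod_cast mem_range_succ_iff.mp hk)
  rw [iteratedDerivWithin_eq_iteratedDeriv hs hfk.contDiffAt hx₀, smul_eq_mul]
  ring

theorem abs_sub_sum_iteratedDeriv_le {f : ℝ → ℝ} {q : ℕ} {C x₀ x : ℝ} (hf : ContDiff ℝ q f)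
    (hC : ∀ t ∈ uIcc x₀ x, |iteratedDeriv q f t| ≤ C) :
    |f x - ∑ k ∈ range q, iteratedDeriv k f x₀ / k ! * (x - x₀) ^ k| ≤
      C * |x - x₀| ^ q / q ! := by
  rcases q with _ | n
  · simpa using hC x right_mem_uIcc
  rcases eq_or_ne x₀ x with rfl | hne
  · simp [Finset.sum_range_succ']
  obtain ⟨x', hx', hrem⟩ := taylor_mean_remainder_lagrange_iteratedDeriv hne hf.contDiffOn
  rw [taylorWithinEval_eq_sum_iteratedDeriv (hf.of_le (by exact_mod_cast le_succ n))
    (uniqueDiffOn_uIcc hne) left_mem_uIcc] at hrem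
  rw [hrem, abs_div, abs_mul, abs_pow, Nat.abs_cast]
  gcongr
  exact hC x' (uIoo_subset_uIcc_self hx')

theorem norm_iteratedDeriv_comp_line_le {E F : Type*} [NormedAddCommGroup E] [NormedSpace ℝ E]
    [NormedAddCommGroup F] [NormedSpace ℝ F] {G : E → F} {n : ℕ} (hG : ContDiff ℝ n G)
    (y v : E) (t : ℝ) :
    ‖iteratedDeriv n (fun τ : ℝ => G (y + τ • v)) t‖ ≤
      ‖iteratedFDeriv ℝ n G (y + t • v)‖ * ‖v‖ ^ n := by
  set L := ContinuousLinearMap.toSpanSingleton ℝ v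
  have hGy : ContDiff ℝ n (fun z => G (y + z)) := hG.comp (contDiff_const.add contDiff_id)
  have hcomp : (fun τ : ℝ => G (y + τ • v)) = (fun z => G (y + z)) ∘ L := rfl
  rw [← norm_iteratedFDeriv_eq_norm_iteratedDeriv, hcomp,
    L.iteratedFDeriv_comp_right hGy t le_rfl, iteratedFDeriv_comp_add_left]
  refine (ContinuousMultilinearMap.norm_compContinuousLinearMap_le _ _).trans ?_
  simp [L, ContinuousLinearMap.norm_toSpanSingleton]

section Quadrature

variable {ι : Type*} [Fintype ι] {c b : ι → ℝ}

theorem integral_sum_pow_eq_quadrature {q : ℕ}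
    (hquad : ∀ j < q, ∑ i, b i * c i ^ j = 1 / ((j : ℝ) + 1)) (a : ℕ → ℝ) :
    ∫ x in (0:ℝ)..1, ∑ k ∈ range q, a k * x ^ k =
      ∑ i, b i * ∑ k ∈ range q, a k * c i ^ k := by
  rw [intervalIntegral.integral_finsetSum fun k _ =>
    (by fun_prop : Continuous _).intervalIntegrable _ _]
  simp_rw [Finset.mul_sum]
  rw [Finset.sum_comm]
  refine Finset.sum_congr rfl fun k hk => ?_
  simp_rw [intervalIntegral.integral_const_mul, integral_pow, mul_left_comm (b _) (a k)]
  rw [← Finset.mul_sum, hquad k (mem_range.mp hk)]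
  simp

theorem abs_integral_sub_quadrature_le_of_abs_sub_le (hc : ∀ i, c i ∈ Icc (0:ℝ) 1)
    {g p : ℝ → ℝ}
    (hg : IntervalIntegrable g volume 0 1)
    (hp : IntervalIntegrable p volume 0 1)
    (hexact : ∫ x in (0:ℝ)..1, p x = ∑ i, b i * p (c i)) {ε : ℝ}
    (hε : ∀ x ∈ Icc (0:ℝ) 1, |g x - p x| ≤ ε) :
    |(∫ x in (0:ℝ)..1, g x) - ∑ i, b i * g (c i)| ≤ (1 + ∑ i, |b i|) * ε := by
  have hint : |∫ x in (0:ℝ)..1, (g x - p x)| ≤ ε :=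
    (intervalIntegral.norm_integral_le_of_norm_le_const (f := fun x => g x - p x) fun x hx =>
      hε x (Ioc_subset_Icc_self (by rwa [uIoc_of_le zero_le_one] at hx))).trans_eq (by norm_num)
  have hsum : |∑ i, b i * (g (c i) - p (c i))| ≤ ∑ i, |b i| * ε :=
    (Finset.abs_sum_le_sum_abs _ _).trans <| Finset.sum_le_sum fun i _ => by
      rw [abs_mul]; exact mul_le_mul_of_nonneg_left (hε _ (hc i)) (abs_nonneg _)
  calc |(∫ x in (0:ℝ)..1, g x) - ∑ i, b i * g (c i)|
      = |(∫ x in (0:ℝ)..1, (g x - p x)) - ∑ i, b i * (g (c i) - p (c i))| := by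
        simp only [intervalIntegral.integral_sub hg hp, hexact, mul_sub, Finset.sum_sub_distrib]
        ring_nf
    _ ≤ ε + ∑ i, |b i| * ε := (abs_sub _ _).trans (add_le_add hint hsum)
    _ = (1 + ∑ i, |b i|) * ε := by rw [← Finset.sum_mul]; ring

theorem abs_integral_sub_quadrature_le_of_abs_iteratedDeriv_le {q : ℕ}
    (hc : ∀ i, c i ∈ Icc (0:ℝ) 1) (hquad : ∀ j < q, ∑ i, b i * c i ^ j = 1 / ((j : ℝ) + 1))
    {g : ℝ → ℝ} (hg : ContDiff ℝ q g)
    {C : ℝ} (hC : ∀ t ∈ Icc (0:ℝ) 1, |iteratedDeriv q g t| ≤ C) :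
    |(∫ x in (0:ℝ)..1, g x) - ∑ i, b i * g (c i)| ≤ (1 + ∑ i, |b i|) * (C / q !) := by
  have hC0 : 0 ≤ C := (abs_nonneg _).trans (hC 0 (left_mem_Icc.mpr zero_le_one))
  refine abs_integral_sub_quadrature_le_of_abs_sub_le hc (hg.continuous.intervalIntegrable _ _)
    ((by fun_prop : Continuous _).intervalIntegrable _ _)
    (integral_sum_pow_eq_quadrature hquad fun k => iteratedDeriv k g 0 / k !)
    fun x hx => ?_
  have hsub : uIcc 0 x ⊆ Icc 0 1 := uIcc_subset_Icc (left_mem_Icc.mpr zero_le_one) hx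
  calc |g x - ∑ k ∈ range q, iteratedDeriv k g 0 / k ! * x ^ k|
      ≤ C * |x - 0| ^ q / q ! := by
        simpa using abs_sub_sum_iteratedDeriv_le hg fun t ht => hC t (hsub ht)
    _ ≤ C * 1 / q ! := by
        gcongr
        exact pow_le_one₀ (abs_nonneg _) (by rw [sub_zero, abs_of_nonneg hx.1]; exact hx.2)
    _ = C / q ! := by rw [mul_one]

end Quadrature

theorem quadrature_line_integral_error_bound_general
    (q M m : ℕ)
    (c b : Fin M → ℝ) (hc : ∀ i, c i ∈ Set.Icc (0:ℝ) 1)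
    (hquad : ∀ j < q, ∑ i, b i * c i ^ j = 1 / ((j : ℝ) + 1))
    (G : EuclideanSpace ℝ (Fin m) → ℝ) (K : ℝ)
    (hG : ContDiff ℝ q G)
    (hK : ∀ x, ‖iteratedFDeriv ℝ q G x‖ ≤ K)
    (y Yt : EuclideanSpace ℝ (Fin m)) :
    |(∫ τ in (0:ℝ)..1, G (y + τ • (Yt - y))) - ∑ i, b i * G (y + c i • (Yt - y))|
      ≤ (1 + ∑ i, |b i|) * K * ‖Yt - y‖ ^ q / q.factorial := by
  have hderiv (t : ℝ) :
      |iteratedDeriv q (fun τ : ℝ => G (y + τ • (Yt - y))) t| ≤ K * ‖Yt - y‖ ^ q :=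
    (norm_iteratedDeriv_comp_line_le hG y (Yt - y) t).trans (by gcongr; exact hK _)
  calc _ ≤ (1 + ∑ i, |b i|) * (K * ‖Yt - y‖ ^ q / q.factorial) :=
        abs_integral_sub_quadrature_le_of_abs_iteratedDeriv_le hc hquad
          (hG.comp (by fun_prop)) fun t _ => hderiv t
    _ = (1 + ∑ i, |b i|) * K * ‖Yt - y‖ ^ q / q.factorial := by ring

/-- deterministic core of Lemma 4.2, (4.9)–(4.10): the error of an
order-`q` quadrature rule applied to the line integral `∫₀¹ G(σ(τ)) dτ` along the
segment `σ(τ) = y + τ(Ỹ − y)` is at most `(1 + Σ|b_i|) K |Ỹ − y|^q / q!` when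
`‖D^q G‖ ≤ K` everywhere. -/
theorem quadrature_line_integral_error_bound
    (q M m : ℕ) (hq : 1 ≤ q) (hM : 1 ≤ M)
    (c b : Fin M → ℝ) (hc : ∀ i, c i ∈ Set.Icc (0:ℝ) 1)
    (hquad : ∀ j < q, ∑ i, b i * c i ^ j = 1 / ((j : ℝ) + 1))
    (G : EuclideanSpace ℝ (Fin m) → ℝ) (K : ℝ)
    (hG : ContDiff ℝ q G)
    (hK : ∀ x, ‖iteratedFDeriv ℝ q G x‖ ≤ K)
    (y Yt : EuclideanSpace ℝ (Fin m)) :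
    |(∫ τ in (0:ℝ)..1, G (y + τ • (Yt - y))) - ∑ i, b i * G (y + c i • (Yt - y))|
      ≤ (1 + ∑ i, |b i|) * K * ‖Yt - y‖ ^ q / q.factorial :=
  quadrature_line_integral_error_bound_general q M m c b hc hquad G K hG hK y Yt
end

section
/- Let f, g : ℝ^m → ℝ^m be continuously differentiable, let L : ℝ^m → ℝ^ν be twice continuously differentiable, and let y ∈ ℝ^m be such that the ν×ν matrix ∇L(y) ∇L(y)ᵀ is invertible and ∇L(y) f(y) = 0, ∇L(y) g(y) = 0. Then there exist δ > 0, ε > 0 and continuous maps (h, w) ↦ (Ȳ(h,w), α₀(h,w), α₁(h,w)) ∈ ℝ^m × ℝ^ν × ℝ^ν, defined for all (h,w) ∈ ℝ² with |h| < δ and |w| < δ, such that: (a) Ȳ(0,0) = y, α₀(0,0) = 0, α₁(0,0) = 0; (b) for every such (h,w), the triple (Ȳ, α₀, α₁) = (Ȳ(h,w), α₀(h,w), α₁(h,w)) satisfies, with σ(τ) = y + τ(Ȳ − y), the MAVF equations Ȳ = y + h[∫₀¹ f(σ(τ)) dτ − (∫₀¹ ∇L(σ(τ))ᵀ dτ)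 α₀] + w[∫₀¹ g(σ(τ)) dτ − (∫₀¹ ∇L(σ(τ))ᵀ dτ) α₁], (∫₀¹∇L(σ) dτ)(∫₀¹∇L(σ)ᵀ dτ) α₀ = (∫₀¹∇L(σ) dτ)(∫₀¹ f(σ) dτ), and (∫₀¹∇L(σ) dτ)(∫₀¹∇L(σ)ᵀ dτ) α₁ = (∫₀¹∇L(σ) dτ)(∫₀¹ g(σ) dτ); and (c) this is the unique solution with |Ȳ − y| + |α₀| + |α₁| < ε. -/
/-!
The MAVF equations are the zero set of a residual `R(h, w; Ȳ, α₀, α₁)` which is `C¹`: parametric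
integrals of `C¹` integrands are `C¹`, and the Jacobian of the `C²` map `L` is `C¹`. At
`(0, 0; y, 0, 0)` the residual vanishes because `∇L(y) f(y) = ∇L(y) g(y) = 0`, and its partial
derivative in `(Ȳ, α₀, α₁)` is block lower-triangular with diagonal blocks `1`,
`∇L(y) ∇L(y)ᵀ`, `∇L(y) ∇L(y)ᵀ`, hence invertible. The implicit function theorem then gives a
continuous solution map with local uniqueness; the size `‖Ȳ - y‖ + ‖α₀‖ + ‖α₁‖` defines the same
neighbourhoods of `(y, 0, 0)` as the product norm.
-/

open Matrix MeasureTheory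

/-- The single-noise MAVF scheme equations for starting point `y`, stepsize `h`,
noise increment `w`, update `Yb` and modification coefficients `a₀, a₁`, where
`J x` is the ν×m Jacobian matrix of `L` at `x`. -/
def MAVFEquations (m ν : ℕ) (f g : (Fin m → ℝ) → (Fin m → ℝ))
    (J : (Fin m → ℝ) → Matrix (Fin ν) (Fin m) ℝ)
    (y : Fin m → ℝ) (h w : ℝ) (Yb : Fin m → ℝ) (a₀ a₁ : Fin ν → ℝ) : Prop :=
  let σ : ℝ → Fin m → ℝ := fun τ => y + τ • (Yb - y)
  let A : Matrix (Fin ν) (Fin m) ℝ :=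
    Matrix.of fun i l => ∫ τ in (0:ℝ)..1, J (σ τ) i l
  let F : Fin m → ℝ := fun l => ∫ τ in (0:ℝ)..1, f (σ τ) l
  let G : Fin m → ℝ := fun l => ∫ τ in (0:ℝ)..1, g (σ τ) l
  Yb = y + h • (F - Aᵀ.mulVec a₀) + w • (G - Aᵀ.mulVec a₁) ∧
    (A * Aᵀ).mulVec a₀ = A.mulVec F ∧
    (A * Aᵀ).mulVec a₁ = A.mulVec G

open Filter Topology

section ParametricIntegral

variable {E G : Type*} [NormedAddCommGroup E] [NormedSpace ℝ E] [FiniteDimensional ℝ E]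
  [NormedAddCommGroup G] [NormedSpace ℝ G] {F : E → ℝ → G}

theorem hasFDerivAt_intervalIntegral_of_contDiff (hF : ContDiff ℝ 1 (Function.uncurry F))
    (a b : ℝ) (x₀ : E) :
    HasFDerivAt (fun x => ∫ t in a..b, F x t)
      (∫ t in a..b, fderiv ℝ (Function.uncurry F) (x₀, t) ∘L .inl ℝ E ℝ) x₀ := by
  set F' : E → ℝ → E →L[ℝ] G := fun x t => fderiv ℝ (Function.uncurry F) (x, t) ∘L .inl ℝ E ℝ
  have hF'c : Continuous (Function.uncurry F') :=
    (hF.continuous_fderiv one_ne_zero).clm_comp continuous_const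
  obtain ⟨M, hM⟩ : ∃ M, ∀ q ∈ Metric.closedBall x₀ 1 ×ˢ Set.uIcc a b, ‖F' q.1 q.2‖ ≤ M :=
    ((isCompact_closedBall x₀ 1).prod isCompact_uIcc).exists_bound_of_continuousOn
      hF'c.continuousOn
  refine intervalIntegral.hasFDerivAt_integral_of_dominated_of_fderiv_le (F' := F')
    (bound := fun _ => M) (Metric.ball_mem_nhds x₀ one_pos) ?_ ?_ ?_ ?_ (intervalIntegrable_const (μ := volume)) ?_
  · exact .of_forall fun x => (hF.continuous.comp (.prodMk_right x)).aestronglyMeasurable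
  · exact (hF.continuous.comp (.prodMk_right x₀)).intervalIntegrable a b
  · exact (hF'c.comp (.prodMk_right x₀)).aestronglyMeasurable
  · exact .of_forall fun t ht x hx =>
      hM (x, t) ⟨Metric.ball_subset_closedBall hx, Set.uIoc_subset_uIcc ht⟩
  · exact .of_forall fun t _ x _ =>
      ((hF.differentiable one_ne_zero _).hasFDerivAt).comp x (hasFDerivAt_prodMk_left x t)

theorem contDiff_intervalIntegral_of_contDiff (hF : ContDiff ℝ 1 (Function.uncurry F))
    (a b : ℝ) : ContDiff ℝ 1 fun x => ∫ t in a..b, F x t := by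
  have hderiv := hasFDerivAt_intervalIntegral_of_contDiff hF a b
  rw [contDiff_one_iff_fderiv, funext fun x => (hderiv x).fderiv]
  exact ⟨fun x => (hderiv x).differentiableAt,
    intervalIntegral.continuous_parametric_intervalIntegral_of_continuous' (μ := volume)
      ((hF.continuous_fderiv one_ne_zero).clm_comp continuous_const) a b⟩

end ParametricIntegral

section MatrixEntries

variable {X : Type*} [NormedAddCommGroup X] [NormedSpace ℝ X] {ι κ μ : Type*} [Fintype κ]
  {n : WithTop ℕ∞}

theorem ContDiff.matrix_mulVec {A : X → Matrix ι κ ℝ} {v : X → κ → ℝ} [Fintype ι]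
    (hA : ∀ i j, ContDiff ℝ n fun x => A x i j) (hv : ContDiff ℝ n v) :
    ContDiff ℝ n fun x => A x *ᵥ v x :=
  contDiff_pi.2 fun i => ContDiff.sum fun j _ => (hA i j).mul (contDiff_pi.1 hv j)

theorem ContDiff.matrix_mul_apply {A : X → Matrix ι κ ℝ} {B : X → Matrix κ μ ℝ}
    (hA : ∀ i j, ContDiff ℝ n fun x => A x i j) (hB : ∀ j k, ContDiff ℝ n fun x => B x j k)
    (i : ι) (k : μ) : ContDiff ℝ n fun x => (A x * B x) i k :=
  ContDiff.sum fun j _ => (hA i j).mul (hB j k)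

end MatrixEntries

theorem ContinuousLinearMap.isInvertible_of_injective {𝕜 E : Type*} [NontriviallyNormedField 𝕜]
    [CompleteSpace 𝕜] [NormedAddCommGroup E] [NormedSpace 𝕜 E] [FiniteDimensional 𝕜 E]
    {T : E →L[𝕜] E} (hT : Function.Injective T) : T.IsInvertible :=
  ⟨(LinearEquiv.ofInjectiveEndo T.toLinearMap hT).toContinuousLinearEquiv, rfl⟩

theorem nhds_basis_sum_norm_sub {E F G : Type*} [SeminormedAddCommGroup E]
    [SeminormedAddCommGroup F] [SeminormedAddCommGroup G] (a : E) (b : F) (c : G) :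
    (𝓝 (a, b, c)).HasBasis (fun ε : ℝ => 0 < ε)
      fun ε => {x | ‖x.1 - a‖ + ‖x.2.1 - b‖ + ‖x.2.2 - c‖ < ε} := by
  refine Metric.nhds_basis_ball.to_hasBasis (fun ε hε => ⟨ε, hε, fun x hx => ?_⟩)
    fun ε hε => ⟨ε / 3, by positivity, fun x hx => ?_⟩
  all_goals
    simp only [Set.mem_ofPred_eq, Metric.mem_ball, Prod.dist_eq, max_lt_iff] at hx ⊢
    simp only [dist_eq_norm] at hx ⊢
    have := norm_nonneg (x.1 - a)
    have := norm_nonneg (x.2.1 - b)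
    have := norm_nonneg (x.2.2 - c)
  · exact ⟨by linarith, by linarith, by linarith⟩
  · linarith

section ImplicitFunction

variable {𝕜 : Type*} [RCLike 𝕜]
  {P X Y : Type*} [NormedAddCommGroup P] [NormedSpace 𝕜 P] [CompleteSpace P]
  [NormedAddCommGroup X] [NormedSpace 𝕜 X] [CompleteSpace X]
  [NormedAddCommGroup Y] [NormedSpace 𝕜 Y] [CompleteSpace Y]

theorem ContDiffAt.exists_continuousOn_ball_implicit_unique {R : P × X → Y} {p₀ : P} {x₀ : X}
    {s : X → ℝ} (hR : ContDiffAt 𝕜 1 R (p₀, x₀))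
    (hinv : (fderiv 𝕜 R (p₀, x₀) ∘L .inr 𝕜 P X).IsInvertible)
    (hs : (𝓝 x₀).HasBasis (fun ε : ℝ => 0 < ε) fun ε => {x | s x < ε}) :
    ∃ ψ : P → X, ψ p₀ = x₀ ∧ ∃ δ > 0, ∃ ε > 0, ContinuousOn ψ (Metric.ball p₀ δ) ∧
      ∀ p ∈ Metric.ball p₀ δ, R (p, ψ p) = R (p₀, x₀) ∧ s (ψ p) < ε ∧
        ∀ x, R (p, x) = R (p₀, x₀) → s x < ε → x = ψ p := by
  set ψ := hR.implicitFunction one_ne_zero hinv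
  have hψ₀ : ψ p₀ = x₀ := hR.implicitFunction_apply_self one_ne_zero hinv
  have hcont : ∀ᶠ p in 𝓝 p₀, ContinuousAt ψ p :=
    ((hR.contDiffAt_implicitFunction one_ne_zero hinv).eventually (by simp)).mono
      fun _ hp => hp.continuousAt
  obtain ⟨U, hU, V, hV, hUV⟩ := mem_nhds_prod_iff.1
    (hR.eventually_apply_eq_iff_implicitFunction one_ne_zero hinv)
  obtain ⟨ε, hε, hεV⟩ := hs.mem_iff.1 hV
  have hsmall : ∀ᶠ p in 𝓝 p₀, s (ψ p) < ε :=
    (hψ₀ ▸ hcont.self_of_nhds.tendsto) (hs.mem_of_mem hε)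
  obtain ⟨δ, hδ, hball⟩ := Metric.mem_nhds_iff.1
    (hcont.and ((hR.eventually_apply_implicitFunction one_ne_zero hinv).and (hsmall.and hU)))
  refine ⟨ψ, hψ₀, δ, hδ, ε, hε, fun p hp => (hball hp).1.continuousWithinAt, fun p hp => ?_⟩
  obtain ⟨-, hsol, hsp, hpU⟩ := hball hp
  exact ⟨hsol, hsp, fun x hx hsx => ((hUV (a := (p, x)) ⟨hpU, hεV hsx⟩).1 hx).symm⟩

end ImplicitFunction

section SegmentAverage

variable {E : Type*} [NormedAddCommGroup E] [NormedSpace ℝ E]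

noncomputable def segmentAverage (φ : E → ℝ) (y Y : E) : ℝ :=
  ∫ τ in (0:ℝ)..1, φ (y + τ • (Y - y))

@[simp]
theorem segmentAverage_self (φ : E → ℝ) (y : E) : segmentAverage φ y y = φ y := by
  simp [segmentAverage]

theorem ContDiff.segmentAverage [FiniteDimensional ℝ E] {φ : E → ℝ} (hφ : ContDiff ℝ 1 φ)
    (y : E) : ContDiff ℝ 1 (segmentAverage φ y) :=
  contDiff_intervalIntegral_of_contDiff (F := fun Y τ => φ (y + τ • (Y - y)))
    (hφ.comp (contDiff_const.add (contDiff_snd.smul (contDiff_fst.sub contDiff_const)))) 0 1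

end SegmentAverage

section Averages

variable {E ι κ : Type*} [NormedAddCommGroup E] [NormedSpace ℝ E]

noncomputable def averagedJacobian (J : E → Matrix ι κ ℝ) (y Y : E) : Matrix ι κ ℝ :=
  .of fun i l => segmentAverage (J · i l) y Y

noncomputable def averagedField (f : E → ι → ℝ) (y Y : E) : ι → ℝ :=
  fun l => segmentAverage (f · l) y Y

@[simp]
theorem averagedJacobian_self (J : E → Matrix ι κ ℝ) (y : E) : averagedJacobian J y y = J y := by
  ext i l
  simp [averagedJacobian]

@[simp]
theorem averagedField_self (f : E → ι → ℝ) (y : E) : averagedField f y y = f y := by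
  ext l
  simp [averagedField]

variable [FiniteDimensional ℝ E]

theorem ContDiff.averagedJacobian_apply {J : E → Matrix ι κ ℝ}
    (hJ : ∀ i l, ContDiff ℝ 1 (J · i l)) (y : E) (i : ι) (l : κ) :
    ContDiff ℝ 1 fun Y => averagedJacobian J y Y i l :=
  (hJ i l).segmentAverage y

theorem ContDiff.averagedField [Fintype ι] {f : E → ι → ℝ} (hf : ContDiff ℝ 1 f) (y : E) :
    ContDiff ℝ 1 (averagedField f y) :=
  contDiff_pi.2 fun l => (contDiff_pi.1 hf l).segmentAverage y

end Averages

theorem contDiff_jacobian_apply {ι κ : Type*} [Fintype ι] [Fintype κ] [DecidableEq κ]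
    {L : (κ → ℝ) → ι → ℝ} (hL : ContDiff ℝ 2 L) {J : (κ → ℝ) → Matrix ι κ ℝ}
    (hJ : ∀ x i l, J x i l = fderiv ℝ L x (Pi.single l 1) i) (i : ι) (l : κ) :
    ContDiff ℝ 1 (J · i l) := by
  simp_rw [hJ]
  exact contDiff_pi.1 ((hL.fderiv_right (by norm_num)).clm_apply contDiff_const) i

section MAVF

variable {m ν : ℕ} {f g : (Fin m → ℝ) → Fin m → ℝ} {J : (Fin m → ℝ) → Matrix (Fin ν) (Fin m) ℝ}
  {y : Fin m → ℝ}

noncomputable def mavfResidual (f g : (Fin m → ℝ) → Fin m → ℝ)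
    (J : (Fin m → ℝ) → Matrix (Fin ν) (Fin m) ℝ) (y : Fin m → ℝ)
    (z : (ℝ × ℝ) × (Fin m → ℝ) × (Fin ν → ℝ) × (Fin ν → ℝ)) :
    (Fin m → ℝ) × (Fin ν → ℝ) × (Fin ν → ℝ) :=
  let A := averagedJacobian J y z.2.1
  let F := averagedField f y z.2.1
  let G := averagedField g y z.2.1
  (z.2.1 - (y + z.1.1 • (F - Aᵀ *ᵥ z.2.2.1) + z.1.2 • (G - Aᵀ *ᵥ z.2.2.2)),
    (A * Aᵀ) *ᵥ z.2.2.1 - A *ᵥ F, (A * Aᵀ) *ᵥ z.2.2.2 - A *ᵥ G)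

theorem mavfEquations_iff_mavfResidual_eq_zero {h w : ℝ} {Y : Fin m → ℝ} {a₀ a₁ : Fin ν → ℝ} :
    MAVFEquations m ν f g J y h w Y a₀ a₁ ↔ mavfResidual f g J y ((h, w), (Y, a₀, a₁)) = 0 := by
  simp only [MAVFEquations, mavfResidual, Prod.ext_iff, Prod.fst_zero, Prod.snd_zero, sub_eq_zero]
  rfl

theorem mavfResidual_base (hfy : J y *ᵥ f y = 0) (hgy : J y *ᵥ g y = 0) :
    mavfResidual f g J y ((0, 0), (y, 0, 0)) = 0 := by
  simp [mavfResidual, hfy, hgy]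

theorem contDiff_mavfResidual (hf : ContDiff ℝ 1 f) (hg : ContDiff ℝ 1 g)
    (hJ : ∀ i l, ContDiff ℝ 1 (J · i l)) : ContDiff ℝ 1 (mavfResidual f g J y) := by
  have hY : ContDiff ℝ 1 fun z : (ℝ × ℝ) × (Fin m → ℝ) × (Fin ν → ℝ) × (Fin ν → ℝ) => z.2.1 :=
    contDiff_snd.fst
  have hA i l : ContDiff ℝ 1 fun z : (ℝ × ℝ) × (Fin m → ℝ) × (Fin ν → ℝ) × (Fin ν → ℝ) =>
      averagedJacobian J y z.2.1 i l :=
    (ContDiff.averagedJacobian_apply hJ y i l).comp hY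
  have hAt l i : ContDiff ℝ 1 fun z : (ℝ × ℝ) × (Fin m → ℝ) × (Fin ν → ℝ) × (Fin ν → ℝ) =>
      (averagedJacobian J y z.2.1)ᵀ l i := hA i l
  have hAAt := ContDiff.matrix_mul_apply hA hAt
  have hF := (hf.averagedField y).comp hY
  have hG := (hg.averagedField y).comp hY
  have ha₀ : ContDiff ℝ 1 fun z : (ℝ × ℝ) × (Fin m → ℝ) × (Fin ν → ℝ) × (Fin ν → ℝ) => z.2.2.1 :=
    contDiff_snd.snd.fst
  have ha₁ : ContDiff ℝ 1 fun z : (ℝ × ℝ) × (Fin m → ℝ) × (Fin ν → ℝ) × (Fin ν → ℝ) => z.2.2.2 :=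
    contDiff_snd.snd.snd
  refine .prodMk (hY.sub ((contDiff_const.add (contDiff_fst.fst.smul
      (hF.sub (.matrix_mulVec hAt ha₀)))).add (contDiff_fst.snd.smul
      (hG.sub (.matrix_mulVec hAt ha₁))))) (.prodMk ?_ ?_)
  · exact (ContDiff.matrix_mulVec hAAt ha₀).sub (.matrix_mulVec hA hF)
  · exact (ContDiff.matrix_mulVec hAAt ha₁).sub (.matrix_mulVec hA hG)

theorem isInvertible_fderiv_mavfResidual_comp_inr (hR : ContDiff ℝ 1 (mavfResidual f g J y))
    (hinv : IsUnit (J y * (J y)ᵀ)) (hfy : J y *ᵥ f y = 0) (hgy : J y *ᵥ g y = 0) :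
    (fderiv ℝ (mavfResidual f g J y) ((0, 0), (y, 0, 0)) ∘L
      .inr ℝ (ℝ × ℝ) ((Fin m → ℝ) × (Fin ν → ℝ) × (Fin ν → ℝ))).IsInvertible := by
  set T := fderiv ℝ (mavfResidual f g J y) ((0, 0), (y, 0, 0)) ∘L
    .inr ℝ (ℝ × ℝ) ((Fin m → ℝ) × (Fin ν → ℝ) × (Fin ν → ℝ))
  set M := J y * (J y)ᵀ
  have hT : HasFDerivAt (fun x => mavfResidual f g J y ((0, 0), x)) T (y, 0, 0) :=
    (hR.differentiable one_ne_zero _).hasFDerivAt.comp _ (hasFDerivAt_prodMk_right _ _)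
  have hfst : ∀ v, (T v).1 = v.1 := by
    have hsub : HasFDerivAt (fun x => (mavfResidual f g J y ((0, 0), x)).1)
        (ContinuousLinearMap.fst ℝ _ _) (y, (0 : Fin ν → ℝ), (0 : Fin ν → ℝ)) := by
      have hres : (fun x => (mavfResidual f g J y ((0, 0), x)).1) = fun x => x.1 - y :=
        funext fun x => by simp [mavfResidual]
      exact hres ▸ hasFDerivAt_fst.sub_const y
    intro v
    exact congrArg (· v) ((hasFDerivAt_fst.comp _ hT).unique hsub)
  have hcoef : ∀ c d, T (0, c, d) = (0, M *ᵥ c, M *ᵥ d) := by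
    intro c d
    refine (hT.hasLineDerivAt _).unique ?_
    have hline : (fun t : ℝ => mavfResidual f g J y ((0, 0), (y, 0, 0) + t • (0, c, d))) =
        fun t => t • ((0, M *ᵥ c, M *ᵥ d) : (Fin m → ℝ) × (Fin ν → ℝ) × (Fin ν → ℝ)) := by
      funext t
      simp [mavfResidual, hfy, hgy, M, Matrix.mulVec_smul]
    unfold HasLineDerivAt
    rw [hline]
    simpa using (hasDerivAt_id (0 : ℝ)).smul_const
      ((0, M *ᵥ c, M *ᵥ d) : (Fin m → ℝ) × (Fin ν → ℝ) × (Fin ν → ℝ))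
  have hM := Matrix.mulVec_injective_iff_isUnit.2 hinv
  refine ContinuousLinearMap.isInvertible_of_injective <|
    (injective_iff_map_eq_zero T).2 fun ⟨u, c, d⟩ hv => ?_
  obtain rfl : u = 0 := by simpa [hv] using (hfst (u, c, d)).symm
  rw [hcoef] at hv
  obtain ⟨hc, hd⟩ := Prod.ext_iff.1 (Prod.ext_iff.1 hv).2
  rw [hM (hc.trans M.mulVec_zero.symm), hM (hd.trans M.mulVec_zero.symm)]
  rfl

end MAVF

/-- deterministic content of Lemma 3.1: by the implicit function
theorem, the single-noise MAVF scheme is uniquely locally solvable, with a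
continuous solution map `(h, w) ↦ (Ȳ, α₀, α₁)` equal to `(y, 0, 0)` at `(0,0)`. -/
theorem mavf_local_solvability
    (m ν : ℕ)
    (f g : (Fin m → ℝ) → (Fin m → ℝ)) (hf : ContDiff ℝ 1 f) (hg : ContDiff ℝ 1 g)
    (L : (Fin m → ℝ) → (Fin ν → ℝ)) (hL : ContDiff ℝ 2 L)
    (J : (Fin m → ℝ) → Matrix (Fin ν) (Fin m) ℝ)
    (hJ : ∀ x i l, J x i l = fderiv ℝ L x (Pi.single l 1) i)
    (y : Fin m → ℝ)
    (hinv : IsUnit (J y * (J y)ᵀ))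
    (hfy : (J y).mulVec (f y) = 0) (hgy : (J y).mulVec (g y) = 0) :
    ∃ δ > (0:ℝ), ∃ ε > (0:ℝ),
      ∃ Yb : ℝ × ℝ → Fin m → ℝ, ∃ a₀ a₁ : ℝ × ℝ → Fin ν → ℝ,
        ContinuousOn (fun p => (Yb p, a₀ p, a₁ p))
          {p : ℝ × ℝ | |p.1| < δ ∧ |p.2| < δ} ∧
        Yb (0, 0) = y ∧ a₀ (0, 0) = 0 ∧ a₁ (0, 0) = 0 ∧
        ∀ h w : ℝ, |h| < δ → |w| < δ →
          MAVFEquations m ν f g J y h w (Yb (h, w)) (a₀ (h, w)) (a₁ (h, w)) ∧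
          ‖Yb (h, w) - y‖ + ‖a₀ (h, w)‖ + ‖a₁ (h, w)‖ < ε ∧
          ∀ Y' b₀ b₁, MAVFEquations m ν f g J y h w Y' b₀ b₁ →
            ‖Y' - y‖ + ‖b₀‖ + ‖b₁‖ < ε →
            Y' = Yb (h, w) ∧ b₀ = a₀ (h, w) ∧ b₁ = a₁ (h, w) := by
  have hR := contDiff_mavfResidual (y := y) hf hg (contDiff_jacobian_apply hL hJ)
  obtain ⟨ψ, hψ₀, δ, hδ, ε, hε, hcont, hψ⟩ :=
    hR.contDiffAt.exists_continuousOn_ball_implicit_unique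
      (isInvertible_fderiv_mavfResidual_comp_inr hR hinv hfy hgy) (nhds_basis_sum_norm_sub y 0 0)
  rw [mavfResidual_base hfy hgy] at hψ
  have hsquare : {p : ℝ × ℝ | |p.1| < δ ∧ |p.2| < δ} = Metric.ball (0, 0) δ := by
    ext p
    simp [Prod.dist_eq]
  refine ⟨δ, hδ, ε, hε, fun p => (ψ p).1, fun p => (ψ p).2.1, fun p => (ψ p).2.2,
    hsquare ▸ hcont, by simp [hψ₀], by simp [hψ₀], by simp [hψ₀], fun h w hh hw => ?_⟩
  obtain ⟨hsol, hsmall, huniq⟩ := hψ (h, w) (hsquare ▸ ⟨hh, hw⟩)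
  refine ⟨mavfEquations_iff_mavfResidual_eq_zero.2 hsol, by simpa using hsmall,
    fun Y' b₀ b₁ heq hsmall' => ?_⟩
  have hx := huniq (Y', b₀, b₁) (mavfEquations_iff_mavfResidual_eq_zero.1 heq)
    (by simpa using hsmall')
  exact ⟨congrArg (·.1) hx, congrArg (·.2.1) hx, congrArg (·.2.2) hx⟩
end
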